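/- arXiv:1601.05286 — 2 statements merged into one kernel-verified Lean document; each statement's English description precedes it below -/
import Mathlib

section
/- Let Φ(t) = e^{t²} − 1 and Φ̃ its complementary N-function. Then for all t, r ≥ 0, Φ̃(tr) ≤ ξ(t) Φ̃(r), where ξ(t) = max{t, t²}. In particular Φ̃ satisfies the Δ₂-condition: Φ̃(2r) ≤ 4 Φ̃(r) for all r ≥ 0. -/
/-!
For `t ≥ 1`, convexity of `exp` gives `t² Φ(w) ≤ Φ(t w)`, so substituting `u = t w` in the
supremum defining `Φ̃(t s)` bounds it by `t² Φ̃(s)`. For `t ≤ 1`, nonnegativity of `Φ` gives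
`t s u − Φ(u) ≤ t (s u − Φ(u))`, hence `Φ̃(t s) ≤ t Φ̃(s)`.
-/

/-- The N-function `Φ(t) = e^{t²} − 1`. -/
noncomputable def PhiN (t : ℝ) : ℝ := Real.exp (t ^ 2) - 1

/-- The complementary (conjugate) N-function `Φ̃(s) = sup_{t ≥ 0} (st − Φ(t))`. -/
noncomputable def PhiConj (s : ℝ) : ℝ :=
  sSup ((fun t => s * t - PhiN t) '' Set.Ici (0 : ℝ))

lemma PhiN_nonneg (t : ℝ) : 0 ≤ PhiN t := by
  have := Real.add_one_le_exp (t ^ 2)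
  unfold PhiN
  nlinarith [sq_nonneg t]

lemma PhiN_zero : PhiN 0 = 0 := by
  simp [PhiN]

lemma bddAbove_PhiConj (s : ℝ) :
    BddAbove ((fun t => s * t - PhiN t) '' Set.Ici (0 : ℝ)) := by
  refine ⟨s ^ 2 / 4, ?_⟩
  rintro _ ⟨u, -, rfl⟩
  have := Real.add_one_le_exp (u ^ 2)
  simp only [PhiN]
  nlinarith [sq_nonneg (u - s / 2)]

lemma le_PhiConj (s : ℝ) {u : ℝ} (hu : 0 ≤ u) : s * u - PhiN u ≤ PhiConj s :=
  le_csSup (bddAbove_PhiConj s) ⟨u, hu, rfl⟩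

lemma PhiConj_nonneg (s : ℝ) : 0 ≤ PhiConj s := by
  simpa [PhiN_zero] using le_PhiConj s le_rfl

lemma PhiConj_le {s B : ℝ} (h : ∀ u, 0 ≤ u → s * u - PhiN u ≤ B) : PhiConj s ≤ B :=
  csSup_le ⟨_, 0, Set.self_mem_Ici, rfl⟩ (by rintro _ ⟨u, hu, rfl⟩; exact h u hu)

/-- Convexity of `exp` between the points `0` and `c x`, with weights `1 - 1/c` and `1/c`. -/
lemma mul_exp_sub_one_le {c : ℝ} (hc : 1 ≤ c) (x : ℝ) :
    c * (Real.exp x - 1) ≤ Real.exp (c * x) - 1 := by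
  have hc0 : 0 < c := by linarith
  have hconv := convexOn_exp.2 (Set.mem_univ 0) (Set.mem_univ (c * x))
    (sub_nonneg.2 (inv_le_one_of_one_le₀ hc)) (inv_nonneg.2 hc0.le) (sub_add_cancel 1 c⁻¹)
  have hx : (1 - c⁻¹) • (0 : ℝ) + c⁻¹ • (c * x) = x := by
    simp [smul_eq_mul, inv_mul_cancel_left₀ hc0.ne']
  rw [hx, smul_eq_mul, smul_eq_mul, Real.exp_zero] at hconv
  have := mul_le_mul_of_nonneg_left hconv hc0.le
  field_simp at this
  linarith

lemma sq_mul_PhiN_le {t : ℝ} (ht : 1 ≤ t) (w : ℝ) : t ^ 2 * PhiN w ≤ PhiN (t * w) := by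
  rw [PhiN, PhiN, mul_pow]
  exact mul_exp_sub_one_le (one_le_pow₀ ht) _

lemma PhiConj_mul_le_of_le_one {t : ℝ} (ht₀ : 0 ≤ t) (ht₁ : t ≤ 1) (s : ℝ) :
    PhiConj (t * s) ≤ t * PhiConj s := by
  refine PhiConj_le fun u hu => ?_
  have hΦ := PhiN_nonneg u
  have hle := mul_le_mul_of_nonneg_left (le_PhiConj s hu) ht₀
  nlinarith

lemma PhiConj_mul_le_of_one_le {t : ℝ} (ht : 1 ≤ t) (s : ℝ) :
    PhiConj (t * s) ≤ t ^ 2 * PhiConj s := by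
  have ht₀ : 0 < t := by linarith
  refine PhiConj_le fun u hu => ?_
  obtain ⟨w, hw, rfl⟩ : ∃ w, 0 ≤ w ∧ u = t * w :=
    ⟨u / t, div_nonneg hu ht₀.le, (mul_div_cancel₀ u ht₀.ne').symm⟩
  have hΦ := sq_mul_PhiN_le ht w
  have hle := mul_le_mul_of_nonneg_left (le_PhiConj s hw) (sq_nonneg t)
  nlinarith

lemma PhiConj_mul_le {t : ℝ} (ht : 0 ≤ t) (s : ℝ) :
    PhiConj (t * s) ≤ max t (t ^ 2) * PhiConj s := by
  rcases le_total t 1 with ht₁ | ht₁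
  · exact (PhiConj_mul_le_of_le_one ht ht₁ s).trans
      (mul_le_mul_of_nonneg_right (le_max_left _ _) (PhiConj_nonneg s))
  · exact (PhiConj_mul_le_of_one_le ht₁ s).trans
      (mul_le_mul_of_nonneg_right (le_max_right _ _) (PhiConj_nonneg s))

theorem stmt1 :
    (∀ t r : ℝ, 0 ≤ t → 0 ≤ r → PhiConj (t * r) ≤ max t (t ^ 2) * PhiConj r) ∧
    (∀ r : ℝ, 0 ≤ r → PhiConj (2 * r) ≤ 4 * PhiConj r) := by
  refine ⟨fun t r ht _ => PhiConj_mul_le ht r, fun r _ => ?_⟩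
  have h := PhiConj_mul_le (t := 2) zero_le_two r
  norm_num at h
  exact h
end

section
/- Let Φ̃ be the conjugate N-function of Φ(t) = e^{t²} − 1. Then for all s > 0, s Φ̃'(s) ≤ 2 Φ̃(s), where Φ̃' = (Φ')^{-1}. -/
/-- `Φ̃' = (Φ')⁻¹`, where `Φ'(t) = 2 t e^{t²}`: if `g` is the inverse of `Φ'` on `[0,∞)`,
then `s Φ̃'(s) = s g(s) ≤ 2 Φ̃(s)` for all `s > 0`. -/
theorem stmt3 (g : ℝ → ℝ) (hg0 : ∀ s, 0 ≤ s → 0 ≤ g s)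
    (hginv : ∀ s, 0 ≤ s → 2 * g s * Real.exp ((g s) ^ 2) = s) :
    ∀ s : ℝ, 0 < s → s * g s ≤ 2 * PhiConj s := by
  intro s hs
  set u := g s with hu
  have hu0 : 0 ≤ u := hg0 s hs.le
  have hsu : 2 * u * Real.exp (u ^ 2) = s := hginv s hs.le
  -- boundedness of the set
  have hbdd : BddAbove ((fun t => s * t - PhiN t) '' Set.Ici (0 : ℝ)) := by
    refine ⟨s ^ 2 / 4 + 1, ?_⟩
    rintro x ⟨t, ht, rfl⟩
    have h1 : t ^ 2 + 1 ≤ Real.exp (t ^ 2) := Real.add_one_le_exp _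
    simp only [PhiN]
    nlinarith [sq_nonneg (s - 2 * t)]
  -- the sup is at least the value at u
  have hmem : s * u - PhiN u ∈ (fun t => s * t - PhiN t) '' Set.Ici (0 : ℝ) :=
    ⟨u, hu0, rfl⟩
  have hle : s * u - PhiN u ≤ PhiConj s := le_csSup hbdd hmem
  -- key inequality: e^{u²} − 1 ≤ u² e^{u²}
  have hE : Real.exp (u ^ 2) - 1 ≤ u ^ 2 * Real.exp (u ^ 2) := by
    have h1 : -(u ^ 2) + 1 ≤ Real.exp (-(u ^ 2)) := Real.add_one_le_exp _
    have h2 : Real.exp (u ^ 2) * Real.exp (-(u ^ 2)) = 1 := by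
      rw [← Real.exp_add]; simp
    nlinarith [Real.exp_pos (u ^ 2)]
  have hPhi : PhiN u ≤ s * u / 2 := by
    simp only [PhiN]
    have : s * u = 2 * u ^ 2 * Real.exp (u ^ 2) := by rw [← hsu]; ring
    rw [this]; nlinarith
  linarith
end
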